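/- arXiv:2501.17106 — 2 statements merged into one kernel-verified Lean document; each statement's English description precedes it below -/
import Mathlib

section
/- Let x_0 < x_1 < ... < x_r be equally spaced nodes with spacing h = x_{j+1} - x_j, and let u_0, ..., u_r be nodal values. For 1 ≤ k ≤ r let p_k be the polynomial of degree at most k interpolating u on a stencil of k+1 consecutive nodes {x_{i_k}, ..., x_{i_k+k}}, and define I_k = (1/r) ∑_{ℓ=1}^{k} ∫_{x_0}^{x_r} h^{2ℓ-1} (p_k^{(ℓ)}(x))² dx. Then I_k ≥ (1/r) ∑_{i=1}^{r} (p_k(x_i) - p_k(x_{i-1}))² for any polynomial p_k and in particular, when p_k interpolates at all nodes x_0,...,x_r with values u_0,...,u_r (case k = r), I_r ≥ min_{1≤j≤r} (u_j - u_{j-1})². -/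
/-!
On each cell `[x_{i-1}, x_i]` the fundamental theorem of calculus and Cauchy–Schwarz give
`(p(x_i) - p(x_{i-1}))² ≤ h ∫ p'²`; summing over the cells bounds the sum of squared jumps by
the `ℓ = 1` term of the indicator, and the other terms are nonnegative. When `p` interpolates
`u` at every node, the jumps are those of `u`, and their mean is at least their minimum.
-/

open Finset intervalIntegral Polynomial
open MeasureTheory (volume)

theorem sq_integral_le_mul_integral_sq {f : ℝ → ℝ} {a b : ℝ} (hab : a ≤ b)
    (hf : IntervalIntegrable f volume a b)
    (hf2 : IntervalIntegrable (fun x => f x ^ 2) volume a b) :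
    (∫ x in a..b, f x) ^ 2 ≤ (b - a) * ∫ x in a..b, f x ^ 2 := by
  -- `c ↦ ∫ (f - c)²` is a nonnegative quadratic, so its discriminant is nonpositive.
  have hquad : ∀ c : ℝ,
      0 ≤ (b - a) * (c * c) + (-2 * ∫ x in a..b, f x) * c + ∫ x in a..b, f x ^ 2 := by
    intro c
    have hexpand : ∫ x in a..b, (f x - c) ^ 2
        = (b - a) * (c * c) + (-2 * ∫ x in a..b, f x) * c + ∫ x in a..b, f x ^ 2 := by
      have hsq : ∀ x, (f x - c) ^ 2 = f x ^ 2 - 2 * c * f x + c * c := fun x => by ring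
      simp_rw [hsq]
      rw [integral_add (hf2.sub (hf.const_mul _)) intervalIntegrable_const,
        integral_sub hf2 (hf.const_mul _), integral_const_mul, integral_const, smul_eq_mul]
      ring
    rw [← hexpand]
    exact integral_nonneg hab fun x _ => sq_nonneg _
  have hdiscrim := discrim_le_zero hquad
  rw [discrim] at hdiscrim
  linarith

section Jumps

variable {g g' : ℝ → ℝ}

theorem sq_sub_le_mul_integral_deriv_sq (hg : ∀ x, HasDerivAt g (g' x) x) (hg' : Continuous g')
    {a b : ℝ} (hab : a ≤ b) :
    (g b - g a) ^ 2 ≤ (b - a) * ∫ x in a..b, g' x ^ 2 := by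
  have hsq : Continuous fun x => g' x ^ 2 := hg'.pow 2
  rw [← integral_eq_sub_of_hasDerivAt (fun x _ => hg x) (hg'.intervalIntegrable a b)]
  exact sq_integral_le_mul_integral_sq hab (hg'.intervalIntegrable a b)
    (hsq.intervalIntegrable a b)

theorem sum_sq_sub_le_mul_integral_deriv_sq (hg : ∀ x, HasDerivAt g (g' x) x)
    (hg' : Continuous g') (x0 : ℝ) {h : ℝ} (hh : 0 ≤ h) (r : ℕ) :
    ∑ i ∈ Icc 1 r, (g (x0 + i * h) - g (x0 + (i - 1 : ℕ) * h)) ^ 2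
      ≤ h * ∫ x in x0..(x0 + r * h), g' x ^ 2 := by
  have hsq : Continuous fun x => g' x ^ 2 := hg'.pow 2
  induction r with
  | zero => simp
  | succ r ih =>
    have hcell := sq_sub_le_mul_integral_deriv_sq hg hg'
      (a := x0 + r * h) (b := x0 + (r + 1 : ℕ) * h) (by push_cast; linarith)
    have hlen : x0 + (r + 1 : ℕ) * h - (x0 + r * h) = h := by push_cast; ring
    rw [hlen] at hcell
    rw [sum_Icc_succ_top (by omega), Nat.add_sub_cancel,
      ← integral_add_adjacent_intervals (hsq.intervalIntegrable _ (x0 + r * h))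
        (hsq.intervalIntegrable _ _), mul_add]
    exact add_le_add ih hcell

end Jumps

/-- The smoothness indicator `I_k` of `p` on the nodes `x0 + j * h`, `0 ≤ j ≤ r`. -/
noncomputable def smoothnessIndicator (p : ℝ[X]) (k r : ℕ) (x0 h : ℝ) : ℝ :=
  ((1 : ℝ) / r) *
    ∑ l ∈ Icc 1 k, ∫ x in x0..(x0 + r * h), h ^ (2 * l - 1) * ((derivative^[l] p).eval x) ^ 2

theorem mean_sq_jump_le_smoothnessIndicator (p : ℝ[X]) {k : ℕ} (hk : 1 ≤ k) (r : ℕ) (x0 : ℝ)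
    {h : ℝ} (hh : 0 ≤ h) :
    ((1 : ℝ) / r) * ∑ i ∈ Icc 1 r, (p.eval (x0 + i * h) - p.eval (x0 + (i - 1 : ℕ) * h)) ^ 2
      ≤ smoothnessIndicator p k r x0 h := by
  have hnodes : x0 ≤ x0 + r * h := le_add_of_nonneg_right (by positivity)
  unfold smoothnessIndicator
  gcongr
  calc _ ≤ h * ∫ x in x0..(x0 + r * h), (derivative p).eval x ^ 2 :=
        sum_sq_sub_le_mul_integral_deriv_sq (fun x => p.hasDerivAt x) p.derivative.continuous
          x0 hh r
    _ = ∫ x in x0..(x0 + r * h), h ^ (2 * 1 - 1) * ((derivative^[1] p).eval x) ^ 2 := by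
        simp only [Nat.reduceMul, Nat.add_one_sub_one, pow_one, Function.iterate_one,
          integral_const_mul]
    _ ≤ _ := single_le_sum (f := fun l =>
          ∫ x in x0..(x0 + r * h), h ^ (2 * l - 1) * ((derivative^[l] p).eval x) ^ 2)
        (fun l _ => integral_nonneg hnodes fun x _ => by positivity) (mem_Icc.2 ⟨le_rfl, hk⟩)

theorem smoothness_indicator_lower_bound_general (r : ℕ) (hr : 0 < r) (k : ℕ)
    (hk1 : 1 ≤ k) (x0 h : ℝ) (hh : 0 < h)
    (p : Polynomial ℝ) (u : ℕ → ℝ) :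
    ((1 : ℝ) / r) *
        ∑ l ∈ Finset.Icc 1 k,
          ∫ x in x0..(x0 + r * h),
            h ^ (2 * l - 1) * ((Polynomial.derivative^[l] p).eval x) ^ 2 ≥
      ((1 : ℝ) / r) *
        ∑ i ∈ Finset.Icc 1 r,
          (p.eval (x0 + i * h) - p.eval (x0 + (i - 1 : ℕ) * h)) ^ 2 ∧
    (k = r → (∀ j ≤ r, p.eval (x0 + j * h) = u j) →
      ((1 : ℝ) / r) *
          ∑ l ∈ Finset.Icc 1 r,
            ∫ x in x0..(x0 + r * h),
              h ^ (2 * l - 1) * ((Polynomial.derivative^[l] p).eval x) ^ 2 ≥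
        (Finset.Icc 1 r).inf' (Finset.nonempty_Icc.2 hr)
          (fun j => (u j - u (j - 1)) ^ 2)) := by
  refine ⟨mean_sq_jump_le_smoothnessIndicator p hk1 r x0 hh.le, fun _ hinterp => ?_⟩
  set m := (Icc 1 r).inf' (nonempty_Icc.2 hr) fun j => (u j - u (j - 1)) ^ 2
  have hmin : #(Icc 1 r) • m ≤ ∑ i ∈ Icc 1 r,
      (p.eval (x0 + i * h) - p.eval (x0 + (i - 1 : ℕ) * h)) ^ 2 := by
    refine card_nsmul_le_sum _ _ m fun i hi => ?_
    rw [hinterp i (mem_Icc.1 hi).2, hinterp (i - 1) (by grind)]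
    exact inf'_le _ hi
  have hr' : (0 : ℝ) < r := by exact_mod_cast hr
  rw [Nat.card_Icc, Nat.add_sub_cancel, nsmul_eq_mul] at hmin
  calc m = (1 / r) * (r * m) := by field_simp
    _ ≤ (1 / r) * ∑ i ∈ Icc 1 r,
          (p.eval (x0 + i * h) - p.eval (x0 + (i - 1 : ℕ) * h)) ^ 2 := by gcongr
    _ ≤ smoothnessIndicator p r r x0 h := mean_sq_jump_le_smoothnessIndicator p hr r x0 hh.le

theorem smoothness_indicator_lower_bound (r : ℕ) (hr : 0 < r) (k : ℕ)
    (hk1 : 1 ≤ k) (hkr : k ≤ r) (x0 h : ℝ) (hh : 0 < h)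
    (p : Polynomial ℝ) (u : ℕ → ℝ) :
    ((1 : ℝ) / r) *
        ∑ l ∈ Finset.Icc 1 k,
          ∫ x in x0..(x0 + r * h),
            h ^ (2 * l - 1) * ((Polynomial.derivative^[l] p).eval x) ^ 2 ≥
      ((1 : ℝ) / r) *
        ∑ i ∈ Finset.Icc 1 r,
          (p.eval (x0 + i * h) - p.eval (x0 + (i - 1 : ℕ) * h)) ^ 2 ∧
    (k = r → (∀ j ≤ r, p.eval (x0 + j * h) = u j) →
      ((1 : ℝ) / r) *
          ∑ l ∈ Finset.Icc 1 r,
            ∫ x in x0..(x0 + r * h),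
              h ^ (2 * l - 1) * ((Polynomial.derivative^[l] p).eval x) ^ 2 ≥
        (Finset.Icc 1 r).inf' (Finset.nonempty_Icc.2 hr)
          (fun j => (u j - u (j - 1)) ^ 2)) :=
  smoothness_indicator_lower_bound_general r hr k hk1 x0 h hh p u
end

section
/- If r_0 = 1, then for each 1 ≤ k ≤ r the ratio α_k = I_1 / I_k satisfies 0 ≤ α_k ≤ 1, where I_1 = min over consecutive pairs of (u_j - u_{j-1})² (up to the factor 1/r) and I_k = (1/r) ∑_{ℓ=1}^{k} ∫_{x_0}^{x_r} h^{2ℓ-1} (p_k^{(ℓ)}(x))² dx with p_k interpolating the data on a stencil of k+1 consecutive equally spaced nodes containing the relevant nodes; more precisely, I_k ≥ (1/r) min_{1≤j≤r} (u_j - u_{j-1})² whenever p_k(x_j) = u_j for all j = 0,...,r. -/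
/-!
Only the `l = 1` term is needed. On the first cell `[x₀, x₀ + h]` the fundamental theorem of
calculus and Cauchy–Schwarz (Jensen's inequality for the square of an average) give
`(u₁ - u₀)² ≤ h ∫ (p')²`; enlarging the cell to `[x₀, x_r]` and adding the nonnegative terms with
`l ≥ 2` only increases the right-hand side, and the minimum is at most `(u₁ - u₀)²`.
-/

open Finset intervalIntegral MeasureTheory Set

theorem sq_intervalIntegral_le_mul_intervalIntegral_sq {f : ℝ → ℝ} {a b : ℝ}
    (hf : IntervalIntegrable f volume a b)
    (hf2 : IntervalIntegrable (fun x => f x ^ 2) volume a b) :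
    (∫ x in a..b, f x) ^ 2 ≤ (b - a) * ∫ x in a..b, f x ^ 2 := by
  rcases eq_or_ne a b with rfl | hab
  · simp
  have hba : b - a ≠ 0 := sub_ne_zero.2 hab.symm
  have jensen : (⨍ x in a..b, f x) ^ 2 ≤ ⨍ x in a..b, f x ^ 2 :=
    (Even.convexOn_pow even_two).map_set_average_le (continuous_pow 2).continuousOn isClosed_univ
      (by simp [hba]) (by simp) (by simp) hf.def' hf2.def'
  rw [interval_average_eq_div, interval_average_eq_div] at jensen
  calc (∫ x in a..b, f x) ^ 2 = (b - a) ^ 2 * ((∫ x in a..b, f x) / (b - a)) ^ 2 := by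
        field_simp
    _ ≤ (b - a) ^ 2 * ((∫ x in a..b, f x ^ 2) / (b - a)) := by gcongr
    _ = (b - a) * ∫ x in a..b, f x ^ 2 := by field_simp

theorem sq_sub_le_mul_intervalIntegral_sq_deriv {f f' : ℝ → ℝ} {a b : ℝ}
    (hderiv : ∀ x ∈ uIcc a b, HasDerivAt f (f' x) x) (hf' : IntervalIntegrable f' volume a b)
    (hf'2 : IntervalIntegrable (fun x => f' x ^ 2) volume a b) :
    (f b - f a) ^ 2 ≤ (b - a) * ∫ x in a..b, f' x ^ 2 := by
  rw [← integral_eq_sub_of_hasDerivAt hderiv hf']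
  exact sq_intervalIntegral_le_mul_intervalIntegral_sq hf' hf'2

theorem alpha_k_bounded_general (r : ℕ) (hr : 0 < r) (k : ℕ) (hk1 : 1 ≤ k)
    (x0 h : ℝ) (hh : 0 < h) (p : Polynomial ℝ) (u : ℕ → ℝ)
    (hinterp : ∀ j ≤ r, p.eval (x0 + j * h) = u j) :
    ((1 : ℝ) / r) * (Finset.Icc 1 r).inf' (Finset.nonempty_Icc.2 hr)
        (fun j => (u j - u (j - 1)) ^ 2) ≤
      ((1 : ℝ) / r) *
        ∑ l ∈ Finset.Icc 1 k,
          ∫ x in x0..(x0 + r * h),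
            h ^ (2 * l - 1) * ((Polynomial.derivative^[l] p).eval x) ^ 2 := by
  set q := Polynomial.derivative p
  have hq2 : Continuous fun x => q.eval x ^ 2 := q.continuous.pow 2
  have hstep : x0 + h ≤ x0 + r * h := by
    gcongr; exact le_mul_of_one_le_left hh.le (by exact_mod_cast hr)
  gcongr
  calc (Finset.Icc 1 r).inf' _ (fun j => (u j - u (j - 1)) ^ 2)
      ≤ (u 1 - u 0) ^ 2 := inf'_le _ (mem_Icc.2 ⟨le_rfl, hr⟩)
    _ = (p.eval (x0 + h) - p.eval x0) ^ 2 := by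
        rw [← hinterp 1 hr, ← hinterp 0 r.zero_le]; simp
    _ ≤ h * ∫ x in x0..x0 + h, q.eval x ^ 2 := by
        simpa using sq_sub_le_mul_intervalIntegral_sq_deriv (a := x0) (b := x0 + h)
          (fun x _ => p.hasDerivAt x) (q.continuous.intervalIntegrable _ _)
          (hq2.intervalIntegrable _ _)
    _ ≤ h * ∫ x in x0..x0 + r * h, q.eval x ^ 2 := by
        gcongr
        exact integral_mono_interval le_rfl (by linarith) hstep
          (.of_forall fun x => sq_nonneg _) (hq2.intervalIntegrable _ _)
    _ = ∫ x in x0..x0 + r * h, h ^ (2 * 1 - 1) * ((Polynomial.derivative^[1] p).eval x) ^ 2 := by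
        simp [q]
    _ ≤ _ := single_le_sum (f := fun l => ∫ x in x0..x0 + r * h,
            h ^ (2 * l - 1) * ((Polynomial.derivative^[l] p).eval x) ^ 2)
          (fun l _ => integral_nonneg (by linarith) fun x _ => by positivity)
          (mem_Icc.2 ⟨le_rfl, hk1⟩)

theorem alpha_k_bounded (r : ℕ) (hr : 0 < r) (k : ℕ) (hk1 : 1 ≤ k)
    (hkr : k ≤ r) (x0 h : ℝ) (hh : 0 < h) (p : Polynomial ℝ) (u : ℕ → ℝ)
    (hinterp : ∀ j ≤ r, p.eval (x0 + j * h) = u j) :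
    ((1 : ℝ) / r) * (Finset.Icc 1 r).inf' (Finset.nonempty_Icc.2 hr)
        (fun j => (u j - u (j - 1)) ^ 2) ≤
      ((1 : ℝ) / r) *
        ∑ l ∈ Finset.Icc 1 k,
          ∫ x in x0..(x0 + r * h),
            h ^ (2 * l - 1) * ((Polynomial.derivative^[l] p).eval x) ^ 2 :=
  alpha_k_bounded_general r hr k hk1 x0 h hh p u hinterp
end
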